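/- Let φ ⊆ Σ^ω be a nonempty (satisfiable) specification and let (G, sI, λ) be a synthesis game for φ with parity objective Φ = Parity(p). Define Es = {(u,t) ∈ E2 : u ∈ Win12(Φ) and t ∉ Win12(Φ)}. Then the environment assumption ψ_Es is realizable for the environment, i.e., there is a Mealy transducer with input alphabet 𝓞 and output alphabet 𝓘 whose language is contained in ψ_Es. -/

import Mathlib

open scoped Classical
noncomputable section

/-! ### Deterministic two-player games on graphs -/

/-- The set of states occurring infinitely often in a play. -/
def infSet {S : Type} (π : ℕ → S) : Set S :=
  {t | ∀ N : ℕ, ∃ k : ℕ, N ≤ k ∧ π k = t}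

/-- Parity objective: the minimal priority occurring infinitely often is even. -/
def ParityObj {S : Type} (p : S → ℕ) : Set (ℕ → S) :=
  {π | Even (sInf (p '' infSet π))}

/-- Co-parity objective: the minimal priority occurring infinitely often is odd.
This is the complement of `ParityObj p`. -/
def CoparityObj {S : Type} (p : S → ℕ) : Set (ℕ → S) :=
  {π | Odd (sInf (p '' infSet π))}

/-- Safety objective: only states of `F` are visited. -/
def SafeObj {S : Type} (F : Set S) : Set (ℕ → S) := {π | ∀ k : ℕ, π k ∈ F}

/-- Reachability objective: some state of `F` is visited. -/
def ReachObj {S : Type} (F : Set S) : Set (ℕ → S) := {π | ∃ k : ℕ, π k ∈ F}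

/-- Büchi objective: some state of `F` is visited infinitely often. -/
def BuchiObj {S : Type} (F : Set S) : Set (ℕ → S) := {π | ∃ t ∈ F, t ∈ infSet π}

/-- A deterministic game graph: a finite directed graph in which every state
has at least one successor, together with the set `S1` of player-1 states
(the remaining states belong to player 2). -/
structure DetGame (S : Type) [Fintype S] where
  E : S → S → Prop
  S1 : Set S
  exists_succ : ∀ s : S, ∃ t : S, E s t

namespace DetGame

variable {S : Type} [Fintype S]

/-- Player-2 states. -/
def S2 (G : DetGame S) : Set S := G.S1ᶜ

/-- A play: an infinite sequence of states following edges. -/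
def IsPlay (G : DetGame S) (π : ℕ → S) : Prop := ∀ k : ℕ, G.E (π k) (π (k + 1))

/-- A strategy for player 1: given the history of states strictly before the
current state, and the current state, it chooses a successor, which must be
along an edge whenever the current state is a player-1 state. -/
structure Strat1 (G : DetGame S) where
  f : List S → S → S
  valid : ∀ (h : List S) (s : S), s ∈ G.S1 → G.E s (f h s)

/-- A strategy for player 2. -/
structure Strat2 (G : DetGame S) where
  f : List S → S → S
  valid : ∀ (h : List S) (s : S), s ∈ G.S2 → G.E s (f h s)

/-- A memoryless strategy depends only on the current state. -/
def Strat1.Memoryless {G : DetGame S} (α : Strat1 G) : Prop :=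
  ∀ (h h' : List S) (s : S), α.f h s = α.f h' s

def Strat2.Memoryless {G : DetGame S} (β : Strat2 G) : Prop :=
  ∀ (h h' : List S) (s : S), β.f h s = β.f h' s

/-- The (history, current state) pair after `k` steps of the play from `s`
where player 1 follows `α` and player 2 follows `β`. -/
def histPair (G : DetGame S) (α : Strat1 G) (β : Strat2 G) (s : S) :
    ℕ → List S × S
  | 0 => ([], s)
  | k + 1 =>
    let p := histPair G α β s k
    (p.1 ++ [p.2], if p.2 ∈ G.S1 then α.f p.1 p.2 else β.f p.1 p.2)

/-- The unique play from `s` when player 1 follows `α` and player 2 follows `β`. -/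
def outcome (G : DetGame S) (s : S) (α : Strat1 G) (β : Strat2 G) : ℕ → S :=
  fun k => (histPair G α β s k).2

/-- Sure winning set of player 1 for objective `Φ`. -/
def Win1 (G : DetGame S) (Φ : Set (ℕ → S)) : Set S :=
  {s | ∃ α : Strat1 G, ∀ β : Strat2 G, G.outcome s α β ∈ Φ}

/-- Sure winning set of player 2 for objective `Φ`. -/
def Win2 (G : DetGame S) (Φ : Set (ℕ → S)) : Set S :=
  {s | ∃ β : Strat2 G, ∀ α : Strat1 G, G.outcome s α β ∈ Φ}

/-- Cooperative winning set: both players together can achieve `Φ`. -/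
def Win12 (G : DetGame S) (Φ : Set (ℕ → S)) : Set S :=
  {s | ∃ (α : Strat1 G) (β : Strat2 G), G.outcome s α β ∈ Φ}

/-- The set of player-2 edges. -/
def E2 (G : DetGame S) : Set (S × S) := {e | G.E e.1 e.2 ∧ e.1 ∈ G.S2}

/-- The objective "either some forbidden edge of `Es` is taken, or the play
remains in the safety component `Safe(Win12(Φ))` of `Φ`". -/
def AssumeSafe (G : DetGame S) (Es : Set (S × S)) (Φ : Set (ℕ → S)) :
    Set (ℕ → S) :=
  {π | (∃ i : ℕ, (π i, π (i + 1)) ∈ Es) ∨ π ∈ SafeObj (G.Win12 Φ)}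

/-- A safety assumption `Es` is safe-sufficient for a state `s` and an
objective `Φ` if player 1 wins `AssumeSafe Es Φ` from `s`. -/
def SafeSufficient (G : DetGame S) (Es : Set (S × S)) (s : S)
    (Φ : Set (ℕ → S)) : Prop :=
  s ∈ G.Win1 (G.AssumeSafe Es Φ)

/-- A safety assumption `Es` is restrictive for `s` and `Φ` if some pair of
strategies produces a play that uses an edge of `Es` and stays in the safety
component of `Φ`. -/
def Restrictive (G : DetGame S) (Es : Set (S × S)) (s : S)
    (Φ : Set (ℕ → S)) : Prop :=
  ∃ (α : Strat1 G) (β : Strat2 G),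
    (∃ i : ℕ, (G.outcome s α β i, G.outcome s α β (i + 1)) ∈ Es) ∧
      G.outcome s α β ∈ SafeObj (G.Win12 Φ)

/-- The objective "either the strong fairness assumption on `El` is violated
(some source state of an edge in `El` repeats forever while the target of
that edge does not), or `Φ` holds". -/
def AssumeFair (G : DetGame S) (El : Set (S × S)) (Φ : Set (ℕ → S)) :
    Set (ℕ → S) :=
  {π | (∃ e ∈ El, e.1 ∈ infSet π ∧ e.2 ∉ infSet π) ∨ π ∈ Φ}

end DetGame

/-! ### Transducers and synthesis games -/

/-- A Moore transducer with input alphabet `Set I` and output alphabet `Set O`. -/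
structure Moore (I O : Type) where
  Q : Type
  fin : Finite Q
  qI : Q
  tr : Q → Set I → Q
  out : Q → Set O

namespace Moore

variable {I O : Type} (T : Moore I O)

/-- The run of the transducer over an infinite input word. -/
def run (w : ℕ → Set I) : ℕ → T.Q
  | 0 => T.qI
  | i + 1 => T.tr (run w i) (w i)

/-- The infinite word over `Set I × Set O` generated by the run on `w`. -/
def output (w : ℕ → Set I) : ℕ → Set I × Set O :=
  fun i => (w i, T.out (T.run w i))

/-- The language of the transducer. -/
def lang : Set (ℕ → Set I × Set O) := {x | ∃ w : ℕ → Set I, x = T.output w}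

end Moore

/-- A specification is (Moore) realizable if some Moore transducer
implements it. -/
def MooreRealizable {I O : Type} (L : Set (ℕ → Set I × Set O)) : Prop :=
  ∃ T : Moore I O, T.lang ⊆ L

/-- `ψ` is a sufficient environment assumption for `φ` if `ψᶜ ∪ φ` is
(Moore) realizable. -/
def SufficientAssumption {I O : Type} (φ ψ : Set (ℕ → Set I × Set O)) : Prop :=
  MooreRealizable (ψᶜ ∪ φ)

/-- A Mealy transducer with input alphabet `Set O` and output alphabet `Set I`
(an environment). -/
structure Mealy (I O : Type) where
  Q : Type
  fin : Finite Q
  qI : Q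
  tr : Q → Set O → Q
  out : Q → Set O → Set I

namespace Mealy

variable {I O : Type} (T : Mealy I O)

def run (w : ℕ → Set O) : ℕ → T.Q
  | 0 => T.qI
  | i + 1 => T.tr (run w i) (w i)

def output (w : ℕ → Set O) : ℕ → Set I × Set O :=
  fun i => (T.out (T.run w i) (w i), w i)

def lang : Set (ℕ → Set I × Set O) := {x | ∃ w : ℕ → Set O, x = T.output w}

end Mealy

/-- `ψ` is realizable for the environment if some Mealy transducer with
input alphabet `Set O` and output alphabet `Set I` implements it. -/
def EnvRealizable {I O : Type} (ψ : Set (ℕ → Set I × Set O)) : Prop :=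
  ∃ T : Mealy I O, T.lang ⊆ ψ

/-- A synthesis game: a bipartite deterministic game graph with an initial
player-1 state, whose player-1 states are labeled by input letters and whose
player-2 states are labeled by output letters, deterministic and complete
with respect to the labels. -/
structure SynthGame (S : Type) [Fintype S] (I O : Type) extends DetGame S where
  sI : S
  sI_mem : sI ∈ S1
  bipartite : ∀ s t : S, E s t → (s ∈ S1 ∧ t ∉ S1) ∨ (s ∉ S1 ∧ t ∈ S1)
  labI : S → Set I
  labO : S → Set O
  labelDet1 : ∀ s t t' : S, s ∈ S1 → E s t → E s t' → labO t = labO t' → t = t'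
  labelDet2 : ∀ s t t' : S, s ∉ S1 → E s t → E s t' → labI t = labI t' → t = t'
  complete1 : ∀ s ∈ S1, ∀ o : Set O, ∃ t : S, E s t ∧ labO t = o
  complete2 : ∀ s ∉ S1, ∀ i : Set I, ∃ t : S, E s t ∧ labI t = i

namespace SynthGame

variable {S I O : Type} [Fintype S] (SG : SynthGame S I O)

/-- The infinite word over `Set I × Set O` corresponding to a play from `sI`. -/
def word (π : ℕ → S) : ℕ → Set I × Set O :=
  fun i => (SG.labI (π (2 * i + 2)), SG.labO (π (2 * i + 1)))

/-- `SG` with priority function `p` is a synthesis game for the specification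
`φ`: a play from `sI` satisfies the parity objective iff its word is in `φ`. -/
def IsGameFor (p : S → ℕ) (φ : Set (ℕ → Set I × Set O)) : Prop :=
  ∀ π : ℕ → S, SG.toDetGame.IsPlay π → π 0 = SG.sI →
    (π ∈ ParityObj p ↔ SG.word π ∈ φ)

/-- The environment assumption defined by a safety assumption `Es`:
words of plays from `sI` never using an edge of `Es`. -/
def psiSafety (Es : Set (S × S)) : Set (ℕ → Set I × Set O) :=
  {w | ∃ π : ℕ → S, SG.toDetGame.IsPlay π ∧ π 0 = SG.sI ∧ SG.word π = w ∧
    ∀ i : ℕ, (π i, π (i + 1)) ∉ Es}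

/-- The environment assumption defined by a strongly fair assumption `El`:
words of plays from `sI` in which, for every edge of `El`, either the source
occurs only finitely often or the edge is taken infinitely often. -/
def psiFair (El : Set (S × S)) : Set (ℕ → Set I × Set O) :=
  {w | ∃ π : ℕ → S, SG.toDetGame.IsPlay π ∧ π 0 = SG.sI ∧ SG.word π = w ∧
    ∀ e ∈ El, e.1 ∉ infSet π ∨
      ∀ N : ℕ, ∃ k : ℕ, N ≤ k ∧ π k = e.1 ∧ π (k + 1) = e.2}

end SynthGame


/-! Every cooperatively winning state for a tail-closed objective such as parity has a
cooperatively winning successor. Hence at a player-2 state the environment can always take an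
edge outside `Es`: one staying in `Win12(Φ)` if the state is in `Win12(Φ)`, an arbitrary one
otherwise. Player-1 edges are never in `Es`, so the environment that reads the output letter,
moves to the player-2 state carrying it, and then answers with such a safe edge produces only
words of plays avoiding `Es`. -/

namespace DetGame

variable {S : Type} [Fintype S] (G : DetGame S)

lemma outcome_isPlay (s : S) (α : Strat1 G) (β : Strat2 G) : G.IsPlay (G.outcome s α β) := by
  intro k
  show G.E (G.histPair α β s k).2 (G.histPair α β s (k + 1)).2
  simp only [histPair]
  split
  · exact α.valid _ _ ‹_›
  · exact β.valid _ _ ‹_›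

def followPlay (π : ℕ → S) (h : List S) (s : S) : S :=
  if G.E s (π (h.length + 1)) then π (h.length + 1) else Classical.choose (G.exists_succ s)

lemma E_followPlay (π : ℕ → S) (h : List S) (s : S) : G.E s (G.followPlay π h s) := by
  unfold followPlay
  split
  · assumption
  · exact Classical.choose_spec (G.exists_succ s)

def followStrat1 (π : ℕ → S) : Strat1 G := ⟨G.followPlay π, fun h s _ => G.E_followPlay π h s⟩

def followStrat2 (π : ℕ → S) : Strat2 G := ⟨G.followPlay π, fun h s _ => G.E_followPlay π h s⟩

lemma histPair_follow {π : ℕ → S} (hπ : G.IsPlay π) (k : ℕ) :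
    (G.histPair (G.followStrat1 π) (G.followStrat2 π) (π 0) k).1.length = k ∧
      (G.histPair (G.followStrat1 π) (G.followStrat2 π) (π 0) k).2 = π k := by
  induction k with
  | zero => exact ⟨rfl, rfl⟩
  | succ k ih =>
    obtain ⟨hlen, hstate⟩ := ih
    set hist := G.histPair (G.followStrat1 π) (G.followStrat2 π) (π 0) k
    have hfollow : G.followPlay π hist.1 hist.2 = π (k + 1) := by
      rw [followPlay, hlen, hstate, if_pos (hπ k)]
    refine ⟨?_, ?_⟩
    · simp only [histPair, List.length_append, List.length_singleton]
      exact congrArg (· + 1) hlen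
    · show (if hist.2 ∈ G.S1 then (G.followStrat1 π).f hist.1 hist.2
        else (G.followStrat2 π).f hist.1 hist.2) = π (k + 1)
      split <;> exact hfollow

lemma outcome_follow {π : ℕ → S} (hπ : G.IsPlay π) :
    G.outcome (π 0) (G.followStrat1 π) (G.followStrat2 π) = π :=
  funext fun k => (G.histPair_follow hπ k).2

lemma mem_win12_of_isPlay {Φ : Set (ℕ → S)} {π : ℕ → S} (hπ : G.IsPlay π) (hΦ : π ∈ Φ) :
    π 0 ∈ G.Win12 Φ :=
  ⟨G.followStrat1 π, G.followStrat2 π, by rwa [G.outcome_follow hπ]⟩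

lemma exists_succ_mem_win12 {Φ : Set (ℕ → S)} (hΦ : ∀ π ∈ Φ, (fun k => π (k + 1)) ∈ Φ)
    {s : S} (hs : s ∈ G.Win12 Φ) : ∃ t, G.E s t ∧ t ∈ G.Win12 Φ := by
  obtain ⟨α, β, hwin⟩ := hs
  have hplay := G.outcome_isPlay s α β
  exact ⟨G.outcome s α β 1, hplay 0,
    G.mem_win12_of_isPlay (fun k => hplay (k + 1)) (hΦ _ hwin)⟩

end DetGame

lemma infSet_shift {S : Type} (π : ℕ → S) : infSet (fun k => π (k + 1)) = infSet π := by
  ext t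
  constructor
  · intro h N
    obtain ⟨k, hk, rfl⟩ := h N
    exact ⟨k + 1, by omega, rfl⟩
  · intro h N
    obtain ⟨k, hk, rfl⟩ := h (N + 1)
    refine ⟨k - 1, by omega, ?_⟩
    show π (k - 1 + 1) = π k
    rw [Nat.sub_add_cancel (by omega)]

lemma shift_mem_parityObj {S : Type} {p : S → ℕ} {π : ℕ → S} (hπ : π ∈ ParityObj p) :
    (fun k => π (k + 1)) ∈ ParityObj p := by
  show Even (sInf (p '' infSet fun k => π (k + 1)))
  rwa [infSet_shift]

lemma Stream'.forall_interleave_succ {α : Type*} {P : α → α → Prop} {r m : Stream' α}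
    (hrm : ∀ i, P (r i) (m i)) (hmr : ∀ i, P (m i) (r (i + 1))) (k : ℕ) :
    P ((r ⋈ m) k) ((r ⋈ m) (k + 1)) := by
  have heven (i : ℕ) : (r ⋈ m) (2 * i) = r i := get_interleave_left i r m
  have hodd (i : ℕ) : (r ⋈ m) (2 * i + 1) = m i := get_interleave_right i r m
  obtain ⟨i, rfl | rfl⟩ := Nat.even_or_odd' k
  · rw [heven, hodd]
    exact hrm i
  · rw [hodd, show 2 * i + 1 + 1 = 2 * (i + 1) by ring, heven]
    exact hmr i

namespace SynthGame

variable {S I O : Type} [Fintype S] (SG : SynthGame S I O)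

lemma not_mem_S1_of_E {s t : S} (hs : s ∈ SG.S1) (hst : SG.E s t) : t ∉ SG.S1 := by
  rcases SG.bipartite s t hst with ⟨_, ht⟩ | ⟨hs', _⟩
  exacts [ht, absurd hs hs']

lemma mem_S1_of_E {s t : S} (hs : s ∉ SG.S1) (hst : SG.E s t) : t ∈ SG.S1 := by
  rcases SG.bipartite s t hst with ⟨hs', _⟩ | ⟨_, ht⟩
  exacts [absurd hs' hs, ht]

lemma envRealizable_psiSafety {Es : Set (S × S)} (hEs : Es ⊆ SG.toDetGame.E2)
    (hsafe : ∀ s ∉ SG.S1, ∃ t, SG.E s t ∧ (s, t) ∉ Es) : EnvRealizable (SG.psiSafety Es) := by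
  obtain ⟨move1, hmove1⟩ : ∃ move1 : S → Set O → S,
      ∀ s ∈ SG.S1, ∀ o, SG.E s (move1 s o) ∧ SG.labO (move1 s o) = o := by
    refine ⟨fun s o => if hs : s ∈ SG.S1 then (SG.complete1 s hs o).choose else s, ?_⟩
    intro s hs o
    simpa only [dif_pos hs] using (SG.complete1 s hs o).choose_spec
  obtain ⟨move2, hmove2⟩ : ∃ move2 : S → S,
      ∀ s ∉ SG.S1, SG.E s (move2 s) ∧ (s, move2 s) ∉ Es := by
    refine ⟨fun s => if hs : s ∈ SG.S1 then s else (hsafe s hs).choose, ?_⟩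
    intro s hs
    simpa only [dif_neg hs] using (hsafe s hs).choose_spec
  let T : Mealy I O := ⟨S, Finite.of_fintype S, SG.sI,
    fun s o => move2 (move1 s o), fun s o => SG.labI (move2 (move1 s o))⟩
  refine ⟨T, ?_⟩
  rintro _ ⟨w, rfl⟩
  set r := T.run w
  set m : ℕ → S := fun i => move1 (r i) (w i)
  have hr : ∀ i, r i ∈ SG.S1 := by
    intro i
    induction i with
    | zero => exact SG.sI_mem
    | succ i ih =>
      have hmi := SG.not_mem_S1_of_E ih (hmove1 _ ih (w i)).1
      exact SG.mem_S1_of_E hmi (hmove2 _ hmi).1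
  have hm : ∀ i, m i ∉ SG.S1 := fun i => SG.not_mem_S1_of_E (hr i) (hmove1 _ (hr i) _).1
  set π : ℕ → S := Stream'.interleave r m
  have hplay : SG.toDetGame.IsPlay π := Stream'.forall_interleave_succ
    (fun i => (hmove1 _ (hr i) _).1) (fun i => (hmove2 _ (hm i)).1)
  have havoid : ∀ k, (π k, π (k + 1)) ∉ Es := Stream'.forall_interleave_succ
    (P := fun a b => (a, b) ∉ Es) (fun i he => (hEs he).2 (hr i)) (fun i => (hmove2 _ (hm i)).2)
  refine ⟨π, hplay, rfl, ?_, havoid⟩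
  funext i
  have hπ_next : π (2 * i + 2) = r (i + 1) := Stream'.get_interleave_left (i + 1) r m
  have hπ_odd : π (2 * i + 1) = m i := Stream'.get_interleave_right i r m
  simp only [word, Mealy.output, hπ_next, hπ_odd, m, (hmove1 _ (hr i) _).2]
  rfl

end SynthGame

theorem psiSafety_env_realizable_general {S I O : Type} [Fintype S]
    (SG : SynthGame S I O) (p : S → ℕ)
    (Es : Set (S × S))
    (hEs : Es = {e | e ∈ SG.toDetGame.E2 ∧
      e.1 ∈ SG.toDetGame.Win12 (ParityObj p) ∧
      e.2 ∉ SG.toDetGame.Win12 (ParityObj p)}) :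
    EnvRealizable (SG.psiSafety Es) := by
  subst hEs
  refine SG.envRealizable_psiSafety (fun e he => he.1) fun s _ => ?_
  by_cases hs : s ∈ SG.toDetGame.Win12 (ParityObj p)
  · obtain ⟨t, hst, ht⟩ :=
      SG.toDetGame.exists_succ_mem_win12 (fun _ => shift_mem_parityObj) hs
    exact ⟨t, hst, fun he => he.2.2 ht⟩
  · obtain ⟨t, hst⟩ := SG.exists_succ s
    exact ⟨t, hst, fun he => hs he.2.1⟩

theorem psiSafety_env_realizable {S I O : Type} [Fintype S] [Fintype I]
    [Fintype O] (SG : SynthGame S I O) (p : S → ℕ)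
    (φ : Set (ℕ → Set I × Set O)) (hφ : φ.Nonempty) (hfor : SG.IsGameFor p φ)
    (Es : Set (S × S))
    (hEs : Es = {e | e ∈ SG.toDetGame.E2 ∧
      e.1 ∈ SG.toDetGame.Win12 (ParityObj p) ∧
      e.2 ∉ SG.toDetGame.Win12 (ParityObj p)}) :
    EnvRealizable (SG.psiSafety Es) :=
  psiSafety_env_realizable_general SG p Es hEs
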